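/- arXiv:1906.06631 — 7 statements merged into one kernel-verified Lean document; each statement's English description precedes it below -/
import Mathlib

section
/- Let G be a finite group such that Out(G) is trivial and the exact sequence 1 → Z(G) → G → Inn(G) → 1 splits. Then for every finite group A and every action α : A → Aut(G), the semidirect product G ⋊_α A is isomorphic to the direct product G × A. -/
/-!
When every automorphism of `G` is inner, conjugation induces an isomorphism `G ⧸ Z(G) ≃* Aut(G)`.
Composing `α` with its inverse and with the splitting `s` lifts `α` to a homomorphism
`φ : A →* G` with `α a = conj (φ a)`, and then `(g, a) ↦ (g * φ a, a)` is an isomorphism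
`G ⋊[α] A ≃* G × A`.
-/

namespace MulAut

variable (G : Type*) [Group G]

theorem ker_conj : (conj : G →* MulAut G).ker = Subgroup.center G := by
  ext g
  simp only [MonoidHom.mem_ker, MulEquiv.ext_iff, conj_apply, one_apply, Subgroup.mem_center_iff]
  exact forall_congr' fun x => by rw [mul_inv_eq_iff_eq_mul, eq_comm]

variable {G}

noncomputable def quotientCenterEquiv (h : Function.Surjective (conj : G →* MulAut G)) :
    G ⧸ Subgroup.center G ≃* MulAut G :=
  (QuotientGroup.quotientMulEquivOfEq (ker_conj G).symm).trans
    (QuotientGroup.quotientKerEquivOfSurjective _ h)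

@[simp]
theorem quotientCenterEquiv_mk (h : Function.Surjective (conj : G →* MulAut G)) (g : G) :
    quotientCenterEquiv h g = conj g :=
  rfl

theorem exists_conj_comp_eq_of_surjective {A : Type*} [Group A]
    (h : Function.Surjective (conj : G →* MulAut G)) {s : G ⧸ Subgroup.center G →* G}
    (hs : (QuotientGroup.mk' (Subgroup.center G)).comp s = MonoidHom.id _) (α : A →* MulAut G) :
    ∃ φ : A →* G, conj.comp φ = α := by
  refine ⟨s.comp ((quotientCenterEquiv h).symm.toMonoidHom.comp α), ?_⟩
  ext1 a
  set x := (quotientCenterEquiv h).symm (α a)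
  calc conj (s x) = quotientCenterEquiv h (s x) := (quotientCenterEquiv_mk h _).symm
    _ = quotientCenterEquiv h x := congrArg _ (DFunLike.congr_fun hs x)
    _ = α a := MulEquiv.apply_symm_apply _ _

end MulAut

namespace SemidirectProduct

variable {N A : Type*} [Group N] [Group A]

def mulEquivProdOfConjComp {α : A →* MulAut N} (φ : A →* N) (hφ : MulAut.conj.comp φ = α) :
    N ⋊[α] A ≃* N × A where
  toFun x := (x.left * φ x.right, x.right)
  invFun p := ⟨p.1 * (φ p.2)⁻¹, p.2⟩
  left_inv x := by ext <;> simp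
  right_inv p := by ext <;> simp
  map_mul' x y := by
    subst hφ
    ext
    · simp only [mul_left, mul_right, map_mul, MonoidHom.comp_apply, MulAut.conj_apply,
        Prod.fst_mul]
      group
    · rfl

end SemidirectProduct

theorem semidirect_eq_direct_of_complete_like_general {G : Type*} [Group G]
    (hout : ∀ f : MulAut G, ∃ g : G, f = MulAut.conj g)
    (hsplit : ∃ s : (G ⧸ Subgroup.center G) →* G,
      (QuotientGroup.mk' (Subgroup.center G)).comp s = MonoidHom.id _)
    {A : Type*} [Group A] (α : A →* MulAut G) :
    Nonempty ((G ⋊[α] A) ≃* G × A) := by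
  obtain ⟨s, hs⟩ := hsplit
  have hconj : Function.Surjective (MulAut.conj : G →* MulAut G) := fun f =>
    (hout f).imp fun _ h => h.symm
  obtain ⟨φ, hφ⟩ := MulAut.exists_conj_comp_eq_of_surjective hconj hs α
  exact ⟨SemidirectProduct.mulEquivProdOfConjComp φ hφ⟩

/-- Let `G` be a finite group with `Out(G)` trivial (every automorphism is inner)
such that `1 → Z(G) → G → Inn(G) → 1` splits (the natural surjection
`G → G/Z(G) ≅ Inn(G)` has a group-theoretic section).  Then every semidirect
product `G ⋊[α] A` with `A` a finite group is isomorphic to `G × A`. -/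
theorem semidirect_eq_direct_of_complete_like {G : Type*} [Group G] [Finite G]
    (hout : ∀ f : MulAut G, ∃ g : G, f = MulAut.conj g)
    (hsplit : ∃ s : (G ⧸ Subgroup.center G) →* G,
      (QuotientGroup.mk' (Subgroup.center G)).comp s = MonoidHom.id _)
    {A : Type*} [Group A] [Finite A] (α : A →* MulAut G) :
    Nonempty ((G ⋊[α] A) ≃* G × A) :=
  semidirect_eq_direct_of_complete_like_general hout hsplit α
end

section
/- Suppose G and G′ are both normal complements of a subgroup U in a group Γ, with G and G′ finite of the same order. Define φ : G → G′ by φ(g) = g·γ where γ is the unique element of U with g·γ ∈ G′. Then φ is a bijection satisfying φ(g₁g₂) = (g₁ φ(g₂) g₁⁻¹)·φ(g₁) for all g₁, g₂ ∈ G, and φ restricts to the identity on G ∩ G′. -/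
/-!
Both `G` and `G'` are transversals of the left cosets of `U`, and `φ g` is the representative
in `G'` of the coset `gU`; so `φ` is the bijection `G ≃ Γ ⧸ U ≃ G'`. For the cocycle rule, the
right-hand side lies in `G'` because `G'` is normal, and it lies in the coset `g₁g₂U`; as `G'`
meets each coset exactly once, it equals `φ (g₁g₂)`.
-/

namespace Subgroup.IsComplement

variable {Γ : Type*} [Group Γ] {K : Subgroup Γ} {S S' : Set Γ}

theorem leftQuotientEquiv_mk_of_mem (hS : IsComplement S K) {x : Γ} (hx : x ∈ S) :
    (hS.leftQuotientEquiv (x : Γ ⧸ K) : Γ) = x :=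
  congrArg Subtype.val (hS.leftQuotientEquiv.apply_symm_apply ⟨x, hx⟩)

theorem eq_of_mem_of_mk_eq (hS : IsComplement S K) {x y : Γ} (hx : x ∈ S) (hy : y ∈ S)
    (hxy : (x : Γ ⧸ K) = y) : x = y := by
  rw [← hS.leftQuotientEquiv_mk_of_mem hx, hxy, hS.leftQuotientEquiv_mk_of_mem hy]

noncomputable def transversalEquiv (hS : IsComplement S K) (hS' : IsComplement S' K) :
    S ≃ S' :=
  hS.leftQuotientEquiv.symm.trans hS'.leftQuotientEquiv

variable (hS : IsComplement S K) (hS' : IsComplement S' K)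

theorem mk_transversalEquiv (s : S) :
    ((transversalEquiv hS hS' s : Γ) : Γ ⧸ K) = (s : Γ) :=
  hS'.quotientGroupMk_leftQuotientEquiv _

theorem exists_mem_transversalEquiv_eq_mul (s : S) :
    ∃ k ∈ K, (transversalEquiv hS hS' s : Γ) = s * k :=
  ⟨_, QuotientGroup.eq.mp (mk_transversalEquiv hS hS' s).symm, (mul_inv_cancel_left _ _).symm⟩

theorem transversalEquiv_eq_of_mem_of_mk_eq (s : S) {y : Γ} (hy : y ∈ S')
    (hys : (y : Γ ⧸ K) = (s : Γ)) : (transversalEquiv hS hS' s : Γ) = y :=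
  hS'.eq_of_mem_of_mk_eq (transversalEquiv hS hS' s).2 hy
    ((mk_transversalEquiv hS hS' s).trans hys.symm)

theorem transversalEquiv_apply_of_mem (s : S) (hs : (s : Γ) ∈ S') :
    (transversalEquiv hS hS' s : Γ) = s :=
  transversalEquiv_eq_of_mem_of_mk_eq hS hS' s hs rfl

end Subgroup.IsComplement

namespace Subgroup.IsComplement'

open Subgroup.IsComplement

variable {Γ : Type*} [Group Γ] {K H H' : Subgroup Γ} [H'.Normal]

theorem transversalEquiv_mul (hH : IsComplement' H K) (hH' : IsComplement' H' K) (h₁ h₂ : H) :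
    (transversalEquiv hH hH' (h₁ * h₂) : Γ) =
      h₁ * transversalEquiv hH hH' h₂ * (h₁ : Γ)⁻¹ * transversalEquiv hH hH' h₁ := by
  set φ := transversalEquiv hH hH'
  obtain ⟨k₁, hk₁, hφ₁⟩ := exists_mem_transversalEquiv_eq_mul hH hH' h₁
  obtain ⟨k₂, hk₂, hφ₂⟩ := exists_mem_transversalEquiv_eq_mul hH hH' h₂
  refine transversalEquiv_eq_of_mem_of_mk_eq hH hH' _ ?_ ?_
  · exact H'.mul_mem (‹H'.Normal›.conj_mem _ (φ h₂).2 h₁) (φ h₁).2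
  · have hcoset : (h₁ : Γ) * φ h₂ * (h₁ : Γ)⁻¹ * φ h₁ = (h₁ * h₂ : Γ) * (k₂ * k₁) := by
      rw [hφ₁, hφ₂]; group
    rw [hcoset, QuotientGroup.mk_mul_of_mem _ (K.mul_mem hk₂ hk₁)]
    rfl

end Subgroup.IsComplement'

open Subgroup.IsComplement Subgroup.IsComplement' in
theorem bijection_between_two_normal_complements_general {Γ : Type*} [Group Γ]
    (U G G' : Subgroup Γ) [G'.Normal]
    (h1 : Subgroup.IsComplement' G U) (h2 : Subgroup.IsComplement' G' U) :
    ∃ φ : G → G',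
      (∀ g : G, ∃ γ ∈ U, (φ g : Γ) = (g : Γ) * γ) ∧
      Function.Bijective φ ∧
      (∀ g₁ g₂ : G,
        (φ (g₁ * g₂) : Γ) = (g₁ : Γ) * (φ g₂ : Γ) * (g₁ : Γ)⁻¹ * (φ g₁ : Γ)) ∧
      (∀ g : G, (g : Γ) ∈ G' → (φ g : Γ) = (g : Γ)) :=
  ⟨transversalEquiv h1 h2, exists_mem_transversalEquiv_eq_mul h1 h2,
    (transversalEquiv h1 h2).bijective, transversalEquiv_mul h1 h2,
    transversalEquiv_apply_of_mem h1 h2⟩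

/-- If `G` and `G′` are normal complements of a subgroup `U` in `Γ`, with `G`, `G′`
finite of the same order, then the map `φ : G → G′`, `φ(g) = g·γ` where `γ ∈ U` is
the unique element with `g·γ ∈ G′`, is a bijection satisfying the cocycle rule
`φ(g₁g₂) = (g₁ φ(g₂) g₁⁻¹) · φ(g₁)` and restricting to the identity on `G ∩ G′`. -/
theorem bijection_between_two_normal_complements {Γ : Type*} [Group Γ]
    (U G G' : Subgroup Γ) [G.Normal] [G'.Normal] [Finite G] [Finite G']
    (hcard : Nat.card G = Nat.card G')
    (h1 : Subgroup.IsComplement' G U) (h2 : Subgroup.IsComplement' G' U) :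
    ∃ φ : G → G',
      (∀ g : G, ∃ γ ∈ U, (φ g : Γ) = (g : Γ) * γ) ∧
      Function.Bijective φ ∧
      (∀ g₁ g₂ : G,
        (φ (g₁ * g₂) : Γ) = (g₁ : Γ) * (φ g₂ : Γ) * (g₁ : Γ)⁻¹ * (φ g₁ : Γ)) ∧
      (∀ g : G, (g : Γ) ∈ G' → (φ g : Γ) = (g : Γ)) :=
  bijection_between_two_normal_complements_general U G G' h1 h2
end

section
/- Suppose G and G′ are both normal complements of a subgroup U in a finite group Γ. Then the map φ : G → G′ sending g to gγ (where γ ∈ U is the unique element with gγ ∈ G′) induces an anti-isomorphism G/(G ∩ G′) → G′/(G ∩ G′). -/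
/-!
Let `p, q : Γ →* U` be the projections along `G'` and `G`, so `φ g = g * (p g)⁻¹`. Since `q` kills
`G` and fixes `U`, `q (φ g) = (p g)⁻¹`, hence `q ((φ (g * h))⁻¹ * φ h * φ g) = 1`: modulo `G ⊓ G'`,
`φ` reverses products. Moreover `φ g ∈ G ↔ p g = 1 ↔ g ∈ G'`, and `φ` is onto, with preimage of
`g'` given by `g' * (q g')⁻¹`. So `φ` induces an isomorphism `G ⧸ (G ⊓ G') ≃* (G' ⧸ (G ⊓ G'))ᵐᵒᵖ`.
-/

namespace Subgroup.IsComplement'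

variable {Γ : Type*} [Group Γ] {U G G' : Subgroup Γ}

section Projection

variable {H : Subgroup Γ} [H.Normal]

noncomputable def projection (h : H.IsComplement' U) : Γ →* U :=
  h.symm.QuotientMulEquiv.toMonoidHom.comp (QuotientGroup.mk' H)

theorem projection_coe (h : H.IsComplement' U) (u : U) : h.projection u = u :=
  h.symm.QuotientMulEquiv.apply_symm_apply u

theorem projection_eq_one_iff (h : H.IsComplement' U) {x : Γ} : h.projection x = 1 ↔ x ∈ H :=
  h.symm.QuotientMulEquiv.map_eq_one_iff.trans (QuotientGroup.eq_one_iff x)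

theorem mul_inv_projection_mem (h : H.IsComplement' U) (x : Γ) :
    x * (h.projection x : Γ)⁻¹ ∈ H := by
  rw [← h.projection_eq_one_iff, map_mul, map_inv, projection_coe, mul_inv_cancel]

end Projection

variable [G'.Normal]

/-- The unique element of `G'` in the coset `g * U`. -/
noncomputable def shift (h' : G'.IsComplement' U) (g : G) : G' :=
  ⟨g * (h'.projection g : Γ)⁻¹, h'.mul_inv_projection_mem g⟩

variable [G.Normal] (h : G.IsComplement' U) (h' : G'.IsComplement' U)
include h h'

theorem projection_shift (g : G) : h.projection (h'.shift g) = (h'.projection g)⁻¹ := by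
  rw [shift, map_mul, h.projection_eq_one_iff.2 g.2, one_mul, map_inv, projection_coe]

theorem shift_mem_iff (g : G) : (h'.shift g : Γ) ∈ G ↔ (g : Γ) ∈ G' := by
  rw [← h.projection_eq_one_iff, projection_shift h h', inv_eq_one, h'.projection_eq_one_iff]

theorem shift_surjective : Function.Surjective (h'.shift : G → G') := by
  intro g'
  refine ⟨⟨g' * (h.projection g' : Γ)⁻¹, h.mul_inv_projection_mem g'⟩, Subtype.ext ?_⟩
  have hproj : h'.projection (g' * (h.projection g' : Γ)⁻¹) = (h.projection g')⁻¹ := by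
    rw [map_mul, h'.projection_eq_one_iff.2 g'.2, one_mul, map_inv, projection_coe]
  simp [shift, hproj]

theorem shift_mul_mem (g₁ g₂ : G) :
    (h'.shift (g₁ * g₂) : Γ)⁻¹ * ((h'.shift g₂ : Γ) * h'.shift g₁) ∈ G := by
  rw [← h.projection_eq_one_iff]
  simp only [map_mul, map_inv, projection_shift h h', inv_inv, coe_mul]
  group

noncomputable def shiftHom : G →* (G' ⧸ (G ⊓ G').subgroupOf G')ᵐᵒᵖ where
  toFun g := .op (h'.shift g)
  map_one' := by
    rw [MulOpposite.op_eq_one_iff, QuotientGroup.eq_one_iff, mem_subgroupOf]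
    exact ⟨(h.shift_mem_iff h' 1).2 (one_mem _), (h'.shift 1).2⟩
  map_mul' g₁ g₂ := by
    rw [← MulOpposite.op_mul, MulOpposite.op_inj, ← QuotientGroup.mk_mul, QuotientGroup.eq,
      mem_subgroupOf]
    exact ⟨h.shift_mul_mem h' g₁ g₂,
      G'.mul_mem (G'.inv_mem (h'.shift _).2) (G'.mul_mem (h'.shift _).2 (h'.shift _).2)⟩

theorem ker_shiftHom : (h.shiftHom h').ker = (G ⊓ G').subgroupOf G := by
  ext g
  simp [shiftHom, mem_subgroupOf, shift_mem_iff h h']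

theorem shiftHom_surjective : Function.Surjective (h.shiftHom h') := by
  rintro ⟨x⟩
  obtain ⟨g', rfl⟩ := QuotientGroup.mk_surjective x
  obtain ⟨g, rfl⟩ := h.shift_surjective h' g'
  exact ⟨g, rfl⟩

noncomputable def shiftMulEquiv :
    G ⧸ (G ⊓ G').subgroupOf G ≃* (G' ⧸ (G ⊓ G').subgroupOf G')ᵐᵒᵖ :=
  (QuotientGroup.quotientMulEquivOfEq (h.ker_shiftHom h').symm).trans
    (QuotientGroup.quotientKerEquivOfSurjective _ (h.shiftHom_surjective h'))

end Subgroup.IsComplement'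

theorem anti_isomorphism_of_two_normal_complements_general {Γ : Type*} [Group Γ]
    (U G G' : Subgroup Γ) [G.Normal] [G'.Normal]
    (h1 : Subgroup.IsComplement' G U) (h2 : Subgroup.IsComplement' G' U) :
    ∃ φ : G → G',
      (∀ g : G, ∃ γ ∈ U, (φ g : Γ) = (g : Γ) * γ) ∧
      ∃ ψ : (G ⧸ (G ⊓ G').subgroupOf G) ≃ (G' ⧸ (G ⊓ G').subgroupOf G'),
        (∀ g : G, ψ (QuotientGroup.mk g) = QuotientGroup.mk (φ g)) ∧
        (∀ x y : G ⧸ (G ⊓ G').subgroupOf G, ψ (x * y) = ψ y * ψ x) := by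
  refine ⟨h2.shift, fun g => ⟨_, inv_mem (h2.projection g).2, rfl⟩,
    (h1.shiftMulEquiv h2).toEquiv.trans MulOpposite.opEquiv.symm, fun g => rfl, fun x y => ?_⟩
  exact congrArg MulOpposite.unop (map_mul (h1.shiftMulEquiv h2) x y)

/-- If `G` and `G′` are normal complements of a subgroup `U` in a finite group `Γ`,
then the map `φ : G → G′` sending `g` to `gγ` (with `γ ∈ U` the unique element such
that `gγ ∈ G′`) induces an anti-isomorphism `G/(G ∩ G′) → G′/(G ∩ G′)`. -/
theorem anti_isomorphism_of_two_normal_complements {Γ : Type*} [Group Γ] [Finite Γ]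
    (U G G' : Subgroup Γ) [G.Normal] [G'.Normal]
    (h1 : Subgroup.IsComplement' G U) (h2 : Subgroup.IsComplement' G' U) :
    ∃ φ : G → G',
      (∀ g : G, ∃ γ ∈ U, (φ g : Γ) = (g : Γ) * γ) ∧
      ∃ ψ : (G ⧸ (G ⊓ G').subgroupOf G) ≃ (G' ⧸ (G ⊓ G').subgroupOf G'),
        (∀ g : G, ψ (QuotientGroup.mk g) = QuotientGroup.mk (φ g)) ∧
        (∀ x y : G ⧸ (G ⊓ G').subgroupOf G, ψ (x * y) = ψ y * ψ x) :=
  anti_isomorphism_of_two_normal_complements_general U G G' h1 h2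
end

section
/- Let G be a finite simple group. If G is a normal complement of a subgroup U in a group Γ, then every normal complement of U in Γ is isomorphic to G. -/
open Subgroup

/-- For a normal subgroup with complement `U`, there is a projection homomorphism
onto `U` that restricts to the identity on `U` and whose "error" lies in `N`. -/
lemma exists_compl_proj {Γ : Type*} [Group Γ] (N U : Subgroup Γ) [N.Normal]
    (h : Subgroup.IsComplement' N U) :
    ∃ p : Γ →* U, (∀ u : U, p ↑u = u) ∧ ∀ g : Γ, g⁻¹ * ↑(p g) ∈ N := by
  have hbij : Function.Bijective ((QuotientGroup.mk' N).comp U.subtype) := by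
    constructor
    · rw [← MonoidHom.ker_eq_bot_iff, eq_bot_iff]
      intro u hu
      have hmem : (u : Γ) ∈ N := (QuotientGroup.eq_one_iff _).mp hu
      have hb := h.disjoint.le_bot (⟨hmem, u.2⟩ : (u : Γ) ∈ N ⊓ U)
      rw [Subgroup.mem_bot] at hb
      exact Subgroup.mem_bot.mpr (Subtype.ext hb)
    · intro q
      induction q using QuotientGroup.induction_on with
      | H g =>
        obtain ⟨⟨n, u⟩, hg⟩ := h.2 g
        refine ⟨u, ?_⟩
        have hn : (QuotientGroup.mk (↑n) : Γ ⧸ N) = 1 :=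
          (QuotientGroup.eq_one_iff _).mpr n.2
        simp only [MonoidHom.comp_apply, QuotientGroup.mk'_apply, Subgroup.coe_subtype]
        rw [← hg, QuotientGroup.mk_mul, hn, one_mul]
  set e : U ≃* Γ ⧸ N := MulEquiv.ofBijective _ hbij with he
  refine ⟨e.symm.toMonoidHom.comp (QuotientGroup.mk' N), ?_, ?_⟩
  · intro u
    have : e u = QuotientGroup.mk (↑u) := rfl
    simp only [MonoidHom.comp_apply, QuotientGroup.mk'_apply, MulEquiv.coe_toMonoidHom]
    rw [← this, MulEquiv.symm_apply_apply]
  · intro g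
    have hmk : (QuotientGroup.mk g : Γ ⧸ N) =
        QuotientGroup.mk (↑(e.symm (QuotientGroup.mk g)) : Γ) := by
      have : e (e.symm (QuotientGroup.mk g)) = QuotientGroup.mk g :=
        e.apply_symm_apply _
      exact this.symm
    exact (QuotientGroup.eq (s := N)).mp hmk

/-- If a finite simple group is a normal complement of a subgroup `U` in a group
`Γ`, then every normal complement of `U` in `Γ` is isomorphic to it. -/
theorem normal_complement_unique_up_to_iso_of_simple {Γ : Type*} [Group Γ]
    (U N N' : Subgroup Γ) [N.Normal] [N'.Normal] [Finite N] [IsSimpleGroup N]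
    (h1 : Subgroup.IsComplement' N U) (h2 : Subgroup.IsComplement' N' U) :
    Nonempty (N ≃* N') := by
  have hnorm : (N'.subgroupOf N).Normal := Subgroup.Normal.subgroupOf (inferInstance : N'.Normal) N
  rcases IsSimpleGroup.eq_bot_or_eq_top_of_normal (N'.subgroupOf N) hnorm with hb | ht
  · -- disjoint case
    have hdisj : Disjoint N N' := by
      have hd := Subgroup.subgroupOf_eq_bot.mp hb
      first | exact hd | exact hd.symm
    obtain ⟨p, hpu, hpN⟩ := exists_compl_proj N U h1
    obtain ⟨p', hpu', hpN'⟩ := exists_compl_proj N' U h2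
    have hker : ∀ g : Γ, g ∈ N → p g = 1 := by
      intro g hg
      have hmem : (↑(p g) : Γ) ∈ N := by
        have := N.mul_mem hg (hpN g)
        simpa using this
      have hb := h1.disjoint.le_bot (⟨hmem, (p g).2⟩ : (↑(p g) : Γ) ∈ N ⊓ U)
      rw [Subgroup.mem_bot] at hb
      exact Subtype.ext hb
    have hker' : ∀ g : Γ, g ∈ N' → p' g = 1 := by
      intro g hg
      have hmem : (↑(p' g) : Γ) ∈ N' := by
        have := N'.mul_mem hg (hpN' g)
        simpa using this
      have hb := h2.disjoint.le_bot (⟨hmem, (p' g).2⟩ : (↑(p' g) : Γ) ∈ N' ⊓ U)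
      rw [Subgroup.mem_bot] at hb
      exact Subtype.ext hb
    set f : N' →* U := p.comp N'.subtype with hf_def
    set f' : N →* U := p'.comp N.subtype with hf'_def
    have hf : Function.Injective f := by
      rw [← MonoidHom.ker_eq_bot_iff, eq_bot_iff]
      intro a ha
      have ha1 : p ↑a = 1 := ha
      have haN : (↑a : Γ) ∈ N := by
        have := hpN (↑a : Γ)
        rw [ha1] at this
        simpa using this
      have hb := hdisj.le_bot (⟨haN, a.2⟩ : (↑a : Γ) ∈ N ⊓ N')
      rw [Subgroup.mem_bot] at hb
      exact Subgroup.mem_bot.mpr (Subtype.ext hb)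
    have hf' : Function.Injective f' := by
      rw [← MonoidHom.ker_eq_bot_iff, eq_bot_iff]
      intro a ha
      have ha1 : p' ↑a = 1 := ha
      have haN : (↑a : Γ) ∈ N' := by
        have := hpN' (↑a : Γ)
        rw [ha1] at this
        simpa using this
      have hb := hdisj.le_bot (⟨a.2, haN⟩ : (↑a : Γ) ∈ N ⊓ N')
      rw [Subgroup.mem_bot] at hb
      exact Subgroup.mem_bot.mpr (Subtype.ext hb)
    have hr : f'.range = f.range := by
      ext u
      simp only [MonoidHom.mem_range]
      constructor
      · rintro ⟨n, hn⟩
        have hu : p' ↑n = u := hn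
        have hyN' : (↑n)⁻¹ * (↑u : Γ) ∈ N' := by
          have := hpN' (↑n : Γ); rwa [hu] at this
        refine ⟨⟨(↑n)⁻¹ * ↑u, hyN'⟩, ?_⟩
        show p ((↑n)⁻¹ * ↑u) = u
        rw [map_mul, map_inv, hker _ n.2, hpu u, inv_one, one_mul]
      · rintro ⟨n, hn⟩
        have hu : p ↑n = u := hn
        have hyN : (↑n)⁻¹ * (↑u : Γ) ∈ N := by
          have := hpN (↑n : Γ); rwa [hu] at this
        refine ⟨⟨(↑n)⁻¹ * ↑u, hyN⟩, ?_⟩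
        show p' ((↑n)⁻¹ * ↑u) = u
        rw [map_mul, map_inv, hker' _ n.2, hpu' u, inv_one, one_mul]
    exact ⟨((MonoidHom.ofInjective hf').trans (MulEquiv.subgroupCongr hr)).trans
      (MonoidHom.ofInjective hf).symm⟩
  · -- N ≤ N' case: then N = N'
    have hle : N ≤ N' := Subgroup.subgroupOf_eq_top.mp ht
    have heq : N = N' := by
      refine le_antisymm hle ?_
      intro x hx
      obtain ⟨⟨n, u⟩, hnu⟩ := h1.2 x
      have hun : (↑u : Γ) = (↑n)⁻¹ * x := by rw [← hnu]; group
      have huN' : (↑u : Γ) ∈ N' := by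
        rw [hun]; exact N'.mul_mem (N'.inv_mem (hle n.2)) hx
      have hb := h2.disjoint.le_bot (⟨huN', u.2⟩ : (↑u : Γ) ∈ N' ⊓ U)
      have hu1 : (↑u : Γ) = 1 := by simpa [Subgroup.mem_bot] using hb
      have : x = ↑n := by
        rw [← hnu]
        show (↑n : Γ) * ↑u = ↑n
        rw [hu1, mul_one]
      rw [this]; exact n.2
    exact ⟨MulEquiv.subgroupCongr heq⟩
end

section
/- Let Γ be a finite group that is the Zappa–Szép product of subgroups G and A (G·A = Γ, G ∩ A = {1}). Then the assignments H ↦ H·A and H′ ↦ G ∩ H′ give mutually inverse, index-preserving bijections between the set of subgroups H ≤ G such that H·A is a subgroup of Γ, and the set of subgroups of Γ containing A. -/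
/-!
Both halves are Dedekind's modular law for `Γ = G·A`: if `A ≤ K` then `(G ∩ K)·A = K ∩ G·A = K`,
and if `H ≤ G` then `G ∩ H·A = H·(A ∩ G) = H`. Indices agree because `G·K = Γ` makes `G` act
transitively on `Γ ⧸ K`, with `G ∩ K` the stabilizer of the trivial coset.
-/

open Pointwise

namespace Subgroup

variable {Γ : Type*} [Group Γ] {G A H K : Subgroup Γ}

theorem relIndex_eq_index_of_mul_eq_univ (h : (G : Set Γ) * (K : Set Γ) = Set.univ) :
    K.relIndex G = K.index := by
  have : MulAction.IsPretransitive G (Γ ⧸ K) := by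
    refine MulAction.IsPretransitive.of_orbit (x₀ := ((1 : Γ) : Γ ⧸ K)) fun y => ?_
    induction y using QuotientGroup.induction_on with | H y => ?_
    obtain ⟨g, hg, k, hk, rfl⟩ : y ∈ (G : Set Γ) * K := h ▸ Set.mem_univ y
    refine ⟨⟨g, hg⟩, ?_⟩
    show (g : Γ) • ((1 : Γ) : Γ ⧸ K) = _
    rw [MulAction.Quotient.smul_mk, QuotientGroup.eq]
    simpa using hk
  have hstab : MulAction.stabilizer G ((1 : Γ) : Γ ⧸ K) = K.subgroupOf G := by
    ext g
    show (g : Γ) • ((1 : Γ) : Γ ⧸ K) = _ ↔ _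
    rw [MulAction.Quotient.smul_mk, QuotientGroup.eq, mem_subgroupOf]
    simp
  rw [relIndex, ← hstab, MulAction.index_stabilizer_of_transitive, index_eq_card]

theorem inf_relIndex_eq_index_of_mul_eq_univ (hGA : (G : Set Γ) * (A : Set Γ) = Set.univ)
    (hAK : A ≤ K) : (G ⊓ K).relIndex G = K.index := by
  rw [inf_relIndex_left]
  refine relIndex_eq_index_of_mul_eq_univ (Set.eq_univ_of_univ_subset ?_)
  rw [← hGA]
  exact Set.mul_subset_mul_left hAK

theorem coe_inf_mul_eq_of_mul_eq_univ (hGA : (G : Set Γ) * (A : Set Γ) = Set.univ)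
    (hAK : A ≤ K) : ((G ⊓ K : Subgroup Γ) : Set Γ) * A = K := by
  rw [inf_comm, inf_mul_assoc K G A hAK, hGA, Set.inter_univ]

theorem inf_eq_of_coe_eq_mul (hdisj : Disjoint G A) (hHG : H ≤ G) (hK : (K : Set Γ) = H * A) :
    G ⊓ K = H := by
  refine SetLike.coe_injective ?_
  rw [coe_inf, hK, Set.inter_comm, ← mul_inf_assoc H A G hHG, hdisj.symm.eq_bot, coe_bot,
    Set.singleton_one, mul_one]

end Subgroup

theorem galois_correspondence_zs_product_general {Γ : Type*} [Group Γ]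
    (G A : Subgroup Γ) (hcomp : Subgroup.IsComplement' G A) :
    (∀ H : Subgroup Γ, H ≤ G → ∀ K : Subgroup Γ,
        (K : Set Γ) = (H : Set Γ) * (A : Set Γ) →
        A ≤ K ∧ G ⊓ K = H ∧ K.index = H.relIndex G) ∧
    (∀ H' : Subgroup Γ, A ≤ H' →
        ((G ⊓ H' : Subgroup Γ) : Set Γ) * (A : Set Γ) = (H' : Set Γ) ∧
        (G ⊓ H').relIndex G = H'.index) := by
  refine ⟨fun H hHG K hK => ?_, fun H' hAH' =>
    ⟨Subgroup.coe_inf_mul_eq_of_mul_eq_univ hcomp.mul_eq hAH',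
      Subgroup.inf_relIndex_eq_index_of_mul_eq_univ hcomp.mul_eq hAH'⟩⟩
  have hAK : A ≤ K := fun a ha => by
    rw [← SetLike.mem_coe, hK]
    exact Set.subset_mul_right _ H.one_mem ha
  have hGK : G ⊓ K = H := Subgroup.inf_eq_of_coe_eq_mul hcomp.disjoint hHG hK
  have hindex : K.index = H.relIndex G := by
    rw [← Subgroup.inf_relIndex_eq_index_of_mul_eq_univ hcomp.mul_eq hAK, hGK]
  exact ⟨hAK, hGK, hindex⟩

/-- In a finite group `Γ` that is the Zappa–Szép product of subgroups `G` and `A`,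
the assignments `H ↦ H·A` and `H′ ↦ G ⊓ H′` are mutually inverse, index-preserving
bijections between the subgroups `H ≤ G` with `H·A` a subgroup of `Γ` and the
subgroups of `Γ` containing `A`. -/
theorem galois_correspondence_zs_product {Γ : Type*} [Group Γ] [Finite Γ]
    (G A : Subgroup Γ) (hcomp : Subgroup.IsComplement' G A) :
    (∀ H : Subgroup Γ, H ≤ G → ∀ K : Subgroup Γ,
        (K : Set Γ) = (H : Set Γ) * (A : Set Γ) →
        A ≤ K ∧ G ⊓ K = H ∧ K.index = H.relIndex G) ∧
    (∀ H' : Subgroup Γ, A ≤ H' →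
        ((G ⊓ H' : Subgroup Γ) : Set Γ) * (A : Set Γ) = (H' : Set Γ) ∧
        (G ⊓ H').relIndex G = H'.index) :=
  galois_correspondence_zs_product_general G A hcomp
end

section
/- Let N/k be a finite Galois field extension, E an intermediate field with k ⊆ E ⊆ N, and H a subgroup of Gal(N/k). Then the following are equivalent: (i) the compositum E·N^H equals N and the extension E·N^H/N^H is Galois of degree [E:k] (where N^H is the fixed field of H); (ii) Gal(N/k) is the Zappa–Szép product of H and Gal(N/E), i.e., H ∩ Gal(N/E) = {1} and |H|·|Gal(N/E)| = |Gal(N/k)|. -/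
/-!
Under the Galois correspondence the compositum `E ⊔ N^H` corresponds to `Gal(N/E) ⊓ H`, so
`E ⊔ N^H = N` exactly when `H ∩ Gal(N/E)` is trivial. The extension `N/N^H` is always Galois
with group `H`, so its degree is `|H|`, and `|Gal(N/k)| = [E : k] · |Gal(N/E)|` turns
`|H| = [E : k]` into `|H| · |Gal(N/E)| = |Gal(N/k)|`.
-/

open IntermediateField Module

namespace IsGalois

variable {k N : Type*} [Field k] [Field N] [Algebra k N] [FiniteDimensional k N] [IsGalois k N]

theorem fixingSubgroup_injective :
    Function.Injective (fixingSubgroup : IntermediateField k N → Subgroup (N ≃ₐ[k] N)) :=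
  fun K L h ↦ by rw [← fixedField_fixingSubgroup K, h, fixedField_fixingSubgroup]

theorem sup_eq_top_iff_fixingSubgroup_inf_eq_bot {K L : IntermediateField k N} :
    K ⊔ L = ⊤ ↔ K.fixingSubgroup ⊓ L.fixingSubgroup = ⊥ := by
  rw [← fixingSubgroup_sup, ← fixingSubgroup_top, fixingSubgroup_injective.eq_iff]

theorem sup_fixedField_eq_top_iff (K : IntermediateField k N) (H : Subgroup (N ≃ₐ[k] N)) :
    K ⊔ fixedField H = ⊤ ↔ H ⊓ K.fixingSubgroup = ⊥ := by
  rw [sup_eq_top_iff_fixingSubgroup_inf_eq_bot, fixingSubgroup_fixedField, inf_comm]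

theorem card_mul_card_fixingSubgroup_eq_card_aut_iff (K : IntermediateField k N)
    (H : Subgroup (N ≃ₐ[k] N)) :
    Nat.card H * Nat.card K.fixingSubgroup = Nat.card (N ≃ₐ[k] N) ↔ Nat.card H = finrank k K := by
  rw [card_fixingSubgroup_eq_finrank, card_aut_eq_finrank, ← finrank_mul_finrank k K N,
    Nat.mul_left_inj finrank_pos.ne']

theorem finrank_fixedField_eq_finrank_iff (K : IntermediateField k N) (H : Subgroup (N ≃ₐ[k] N)) :
    finrank (fixedField H) N = finrank k K ↔
      Nat.card H * Nat.card K.fixingSubgroup = Nat.card (N ≃ₐ[k] N) := by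
  rw [finrank_fixedField_eq_card, card_mul_card_fixingSubgroup_eq_card_aut_iff]

end IsGalois

/-- Let `N/k` be a finite Galois extension, `E` an intermediate field, and `H` a
subgroup of `Gal(N/k)`, with fixed field `N^H`.  Then the compositum `E·N^H`
equals `N` with `E·N^H/N^H` Galois of degree `[E:k]` if and only if `Gal(N/k)` is
the Zappa–Szép product of `H` and `Gal(N/E)`, i.e. `H ∩ Gal(N/E) = {1}` and
`|H|·|Gal(N/E)| = |Gal(N/k)|`. -/
theorem potentially_galois_iff_zs_product {k N : Type*} [Field k] [Field N]
    [Algebra k N] [FiniteDimensional k N] [IsGalois k N]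
    (E : IntermediateField k N) (H : Subgroup (N ≃ₐ[k] N)) :
    (E ⊔ IntermediateField.fixedField H = ⊤ ∧
      IsGalois (IntermediateField.fixedField H) N ∧
      Module.finrank (IntermediateField.fixedField H) N = Module.finrank k E) ↔
    (H ⊓ E.fixingSubgroup = ⊥ ∧
      Nat.card H * Nat.card E.fixingSubgroup = Nat.card (N ≃ₐ[k] N)) := by
  have hGalois : IsGalois (fixedField H) N := IsGalois.tower_top_of_isGalois k _ N
  rw [IsGalois.sup_fixedField_eq_top_iff, IsGalois.finrank_fixedField_eq_finrank_iff E H]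
  exact ⟨fun ⟨hinf, _, hcard⟩ ↦ ⟨hinf, hcard⟩, fun ⟨hinf, hcard⟩ ↦ ⟨hinf, hGalois, hcard⟩⟩
end

section
/- Let N/k be a finite Galois field extension and E an intermediate field such that Gal(N/k) is the Zappa–Szép product of a subgroup H and Gal(N/E) (i.e., H ∩ Gal(N/E) = {1} and |H|·|Gal(N/E)| = |Gal(N/k)|). Then |H| = [E:k], the compositum E·N^H equals N, and [E·N^H : N^H] = [E:k]. -/
/-! In the Galois correspondence for `N/k` the compositum `E ⊔ N^H` corresponds to
`Gal(N/E) ⊓ H = 1`, so it is all of `N`. Since `[E:k]` is the index of `Gal(N/E)`,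
the product formula `|H|·|Gal(N/E)| = |Gal(N/k)|` forces `|H| = [E:k]`, and
`[N : N^H] = |H|` by Artin's theorem. -/

theorem Subgroup.card_eq_index_of_card_mul_card_eq {G : Type*} [Group G] [Finite G]
    {H K : Subgroup G} (h : Nat.card H * Nat.card K = Nat.card G) :
    Nat.card H = K.index :=
  Nat.eq_of_mul_eq_mul_right Nat.card_pos (h.trans K.index_mul_card.symm)

namespace IntermediateField

variable {k N : Type*} [Field k] [Field N] [Algebra k N] [FiniteDimensional k N]

theorem fixingSubgroup_sup_fixedField (E : IntermediateField k N)
    (H : Subgroup (N ≃ₐ[k] N)) :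
    (E ⊔ fixedField H).fixingSubgroup = E.fixingSubgroup ⊓ H := by
  rw [fixingSubgroup_sup, fixingSubgroup_fixedField]

theorem sup_fixedField_eq_top_of_inf_fixingSubgroup_eq_bot [IsGalois k N]
    {E : IntermediateField k N} {H : Subgroup (N ≃ₐ[k] N)}
    (h : H ⊓ E.fixingSubgroup = ⊥) :
    E ⊔ fixedField H = ⊤ := by
  rw [← IsGalois.fixedField_fixingSubgroup (E ⊔ fixedField H), fixingSubgroup_sup_fixedField,
    inf_comm, h, fixedField_bot]

end IntermediateField

/-- If `Gal(N/k)` is the Zappa–Szép product of a subgroup `H` and `Gal(N/E)` for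
an intermediate field `E` of a finite Galois extension `N/k`, then
`|H| = [E:k]`, the compositum `E·N^H` is all of `N`, and `[E·N^H : N^H] = [E:k]`. -/
theorem zs_product_gives_potentially_galois {k N : Type*} [Field k] [Field N]
    [Algebra k N] [FiniteDimensional k N] [IsGalois k N]
    (E : IntermediateField k N) (H : Subgroup (N ≃ₐ[k] N))
    (hinf : H ⊓ E.fixingSubgroup = ⊥)
    (hcard : Nat.card H * Nat.card E.fixingSubgroup = Nat.card (N ≃ₐ[k] N)) :
    Nat.card H = Module.finrank k E ∧
    E ⊔ IntermediateField.fixedField H = ⊤ ∧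
    Module.finrank (IntermediateField.fixedField H) N = Module.finrank k E := by
  have hH : Nat.card H = Module.finrank k E := by
    rw [IntermediateField.finrank_eq_fixingSubgroup_index]
    exact Subgroup.card_eq_index_of_card_mul_card_eq hcard
  exact ⟨hH, IntermediateField.sup_fixedField_eq_top_of_inf_fixingSubgroup_eq_bot hinf,
    (IntermediateField.finrank_fixedField_eq_card H).trans hH⟩
end
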